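/- arXiv:1302.3676 — 8 statements merged into one kernel-verified Lean document; each statement's English description precedes it below -/
import Mathlib

section
/- For every odd prime p, the superfactorial sf(p-1) = ∏_{k=1}^{p-1} k! is congruent to the double factorial (p-1)!! modulo p. -/
/-!
Grouping the factors of `sf (2m)` in pairs gives `(2i+1)! (2i+2)! = (2i+2) ((2i+1)!)²`, so
`sf (2m) = (2m)‼ · (∏_{i<m} (2i+1)!)²`. For `p = 2m+1`, Wilson's theorem gives
`k! (p-1-k)! ≡ (-1)^(k+1) (mod p)`; pairing `(2i+1)!` with `(p-2-2i)!` shows that the square of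
`∏_{i<m} (2i+1)!` is `1` modulo `p`.
-/

def sf (n : ℕ) : ℕ := ∏ k ∈ Finset.Icc 1 n, Nat.factorial k

-- `open Nat` would shadow `sf` by Mathlib's scoped notation for `Nat.superFactorial`.
open Finset

theorem sf_succ (n : ℕ) : sf (n + 1) = sf n * (n + 1).factorial :=
  prod_Icc_succ_top (by omega) _

theorem sf_two_mul (m : ℕ) :
    sf (2 * m) = (2 * m).doubleFactorial * (∏ i ∈ range m, (2 * i + 1).factorial) ^ 2 := by
  induction m with
  | zero => rfl
  | succ m ih =>
    rw [show 2 * (m + 1) = 2 * m + 1 + 1 by ring, sf_succ, sf_succ, ih,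
      Nat.factorial_succ (2 * m + 1), Nat.doubleFactorial_add_two, prod_range_succ]
    ring

theorem ZMod.factorial_mul_factorial_sub_one_sub {p : ℕ} [Fact p.Prime] {k : ℕ}
    (hk : k ≤ p - 1) :
    (k.factorial * (p - 1 - k).factorial : ZMod p) = (-1) ^ (k + 1) := by
  have wilson : ((p - 1 - k).factorial : ZMod p) * ((-1) ^ k * k.factorial) = -1 := by
    rw [← ZMod.cast_descFactorial (by omega), ← Nat.cast_mul,
      Nat.factorial_mul_descFactorial hk, ZMod.wilsons_lemma]
  have hsq : ((-1 : ZMod p) ^ k) ^ 2 = 1 := by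
    rw [← pow_mul, mul_comm, pow_mul, neg_one_sq, one_pow]
  linear_combination
    (-1 : ZMod p) ^ k * wilson - (k.factorial * (p - 1 - k).factorial : ZMod p) * hsq

theorem ZMod.prod_factorial_odd_sq_eq_one {m : ℕ} (hp : (2 * m + 1).Prime) :
    (∏ i ∈ range m, ((2 * i + 1).factorial : ZMod (2 * m + 1))) ^ 2 = 1 := by
  have : Fact (2 * m + 1).Prime := ⟨hp⟩
  have pair : ∀ i ∈ range m,
      ((2 * i + 1).factorial * (2 * (m - 1 - i) + 1).factorial : ZMod (2 * m + 1)) = 1 := by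
    intro i hi
    have hi : i < m := mem_range.mp hi
    rw [show 2 * (m - 1 - i) + 1 = 2 * m + 1 - 1 - (2 * i + 1) by omega,
      ZMod.factorial_mul_factorial_sub_one_sub (by omega)]
    exact Even.neg_one_pow ⟨i + 1, by ring⟩
  rw [sq]
  nth_rewrite 2 [← prod_range_reflect]
  rw [← prod_mul_distrib, prod_congr rfl pair, prod_const_one]

theorem stmt0 (p : ℕ) (hp : p.Prime) (hodd : Odd p) :
    (sf (p - 1) : ZMod p) = (Nat.doubleFactorial (p - 1) : ZMod p) := by
  obtain ⟨m, rfl⟩ := hodd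
  rw [Nat.add_sub_cancel, sf_two_mul]
  push_cast
  rw [ZMod.prod_factorial_odd_sq_eq_one hp, mul_one]
end

section
/- Let p be a prime with p ≡ 3 (mod 4), and let μ be the number of j with 1 ≤ j < p/2 such that the inverse of j modulo p, taken as a representative in {1,...,p-1}, is also less than p/2. Then (p-1)!! ≡ (-1)^((μ+1)/2) (mod p). -/
open Finset

theorem stmt7 (p : ℕ) (hp : p.Prime) (h3 : p % 4 = 3)
    (μ : ℕ)
    (hμ : μ = ((Finset.Ico 1 p).filter
      (fun j => 2 * j < p ∧ 2 * ((j : ZMod p)⁻¹.val) < p)).card) :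
    (Nat.doubleFactorial (p - 1) : ZMod p) = (-1) ^ ((μ + 1) / 2) := by
  haveI : Fact p.Prime := ⟨hp⟩
  haveI : NeZero p := ⟨by omega⟩
  have hpm : p = 2 * (p / 2) + 1 := by omega
  set m := p / 2 with hmdef
  -- basic facts about modular inverses
  have hne : ∀ j : ℕ, 1 ≤ j → j < p → (j : ZMod p) ≠ 0 := by
    intro j h1 h2 h0
    rw [ZMod.natCast_eq_zero_iff] at h0
    exact absurd (Nat.le_of_dvd (by omega) h0) (by omega)
  have hIcast : ∀ j : ℕ, (((((j : ZMod p)⁻¹).val : ℕ)) : ZMod p) = (j : ZMod p)⁻¹ := by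
    intro j; rw [ZMod.natCast_val, ZMod.cast_id]
  have hIlt : ∀ j : ℕ, ((j : ZMod p)⁻¹).val < p := fun j => ZMod.val_lt _
  have hIpos : ∀ j : ℕ, 1 ≤ j → j < p → 1 ≤ ((j : ZMod p)⁻¹).val := by
    intro j h1 h2
    rcases Nat.eq_zero_or_pos ((j : ZMod p)⁻¹).val with h | h
    · rw [ZMod.val_eq_zero, inv_eq_zero] at h
      exact absurd h (hne j h1 h2)
    · exact h
  have hII : ∀ j : ℕ, j < p → ((((((j : ZMod p)⁻¹).val : ℕ) : ZMod p))⁻¹).val = j := by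
    intro j h2
    rw [hIcast, inv_inv, ZMod.val_cast_of_lt h2]
  have hmul : ∀ j : ℕ, 1 ≤ j → j < p → (j : ZMod p) * (((j : ZMod p)⁻¹).val : ZMod p) = 1 := by
    intro j h1 h2
    rw [hIcast, mul_inv_cancel₀ (hne j h1 h2)]
  have hsubcast : ∀ j : ℕ, j ≤ p → ((p - j : ℕ) : ZMod p) = -(j : ZMod p) := by
    intro j hj
    rw [Nat.cast_sub hj, ZMod.natCast_self, zero_sub]
  have hgval : ∀ j : ℕ, 1 ≤ j → j < p →
      (((p - ((j : ZMod p)⁻¹).val : ℕ) : ZMod p))⁻¹.val = p - j := by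
    intro j h1 hjp
    rw [hsubcast _ (le_of_lt (hIlt j)), inv_neg, hIcast j, inv_inv,
      ← hsubcast j (le_of_lt hjp), ZMod.val_cast_of_lt (by omega)]
  -- no square root of -1 mod p
  have hnosq : ¬ IsSquare (-1 : ZMod p) := by
    rw [ZMod.exists_sq_eq_neg_one_iff]
    simp [h3]
  -- if the inverse is the negative, contradiction
  have hneginv : ∀ j : ℕ, 1 ≤ j → j < p → ((j : ZMod p)⁻¹).val = p - j → False := by
    intro j h1 hjp hIj
    have hc : (j : ZMod p)⁻¹ = -(j : ZMod p) := by
      rw [← hIcast j, hIj, hsubcast j (le_of_lt hjp)]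
    have hsq : (j : ZMod p) * (j : ZMod p) = -1 := by
      have h := mul_inv_cancel₀ (hne j h1 hjp)
      rw [hc] at h
      linear_combination -h
    exact hnosq ⟨(j : ZMod p), hsq.symm⟩
  -- the two pieces
  set A := (Finset.Ico 1 (m + 1)).filter (fun j : ℕ => 2 * ((j : ZMod p)⁻¹.val) < p) with hA
  set B := (Finset.Ico 1 (m + 1)).filter (fun j : ℕ => ¬ (2 * ((j : ZMod p)⁻¹.val) < p)) with hB
  have hmemA : ∀ j : ℕ, j ∈ A ↔ (1 ≤ j ∧ j ≤ m ∧ 2 * ((j : ZMod p)⁻¹.val) < p) := by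
    intro j
    simp only [hA, mem_filter, mem_Ico]
    omega
  have hmemB : ∀ j : ℕ, j ∈ B ↔ (1 ≤ j ∧ j ≤ m ∧ ¬ (2 * ((j : ZMod p)⁻¹.val) < p)) := by
    intro j
    simp only [hB, mem_filter, mem_Ico]
    omega
  have hμA : μ = A.card := by
    rw [hμ]
    congr 1
    ext j
    simp only [hA, mem_filter, mem_Ico]
    constructor
    · rintro ⟨⟨h1, h2⟩, h4, h5⟩
      exact ⟨⟨h1, by omega⟩, h5⟩
    · rintro ⟨⟨h1, h2⟩, h5⟩
      exact ⟨⟨h1, by omega⟩, by omega, h5⟩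
  have hcards : A.card + B.card = m := by
    rw [hA, hB, Finset.card_filter_add_card_filter_not, Nat.card_Ico]
    omega
  -- product over A is 1
  have hprodA : (∏ j ∈ A, (j : ZMod p)) = 1 := by
    refine Finset.prod_involution (fun j _ => ((j : ZMod p)⁻¹).val) ?_ ?_ ?_ ?_
    · intro j hj
      rw [hmemA] at hj
      exact hmul j hj.1 (by omega)
    · intro j hj hfj heq
      rw [hmemA] at hj
      have heq' : ((j : ZMod p)⁻¹).val = j := heq
      have h2 : (j : ZMod p) * (j : ZMod p) = 1 := by
        have := hmul j hj.1 (by omega)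
        rw [heq'] at this
        exact this
      rcases mul_self_eq_one_iff.mp h2 with h | h
      · exact hfj h
      · have hpj : (j : ZMod p) = ((p - 1 : ℕ) : ZMod p) := by
          rw [hsubcast 1 (by omega)]
          simpa using h
        have : j = p - 1 := by
          have h' := congrArg ZMod.val hpj
          rwa [ZMod.val_cast_of_lt (by omega), ZMod.val_cast_of_lt (by omega)] at h'
        omega
    · intro j hj
      rw [hmemA] at hj
      show ((j : ZMod p)⁻¹).val ∈ A
      rw [hmemA]
      refine ⟨hIpos j hj.1 (by omega), by have := hj.2.2; omega, ?_⟩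
      rw [hII j (by omega)]
      omega
    · intro j hj
      rw [hmemA] at hj
      exact hII j (by omega)
  -- card B is even
  have hBeven : ∃ k, B.card = 2 * k := by
    have hsum : (∑ _j ∈ B, (1 : ZMod 2)) = 0 := by
      refine Finset.sum_involution (fun j _ => p - ((j : ZMod p)⁻¹).val) ?_ ?_ ?_ ?_
      · intro j hj; decide
      · intro j hj hfj heq
        rw [hmemB] at hj
        have heq' : p - ((j : ZMod p)⁻¹).val = j := heq
        have hIub : ((j : ZMod p)⁻¹).val < p := hIlt j
        exact hneginv j hj.1 (by omega) (by omega)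
      · intro j hj
        rw [hmemB] at hj
        show p - ((j : ZMod p)⁻¹).val ∈ B
        rw [hmemB]
        have hIub : ((j : ZMod p)⁻¹).val < p := hIlt j
        have hIlb : 1 ≤ ((j : ZMod p)⁻¹).val := hIpos j hj.1 (by omega)
        have hnot := hj.2.2
        refine ⟨by omega, by omega, ?_⟩
        rw [hgval j hj.1 (by omega)]
        omega
      · intro j hj
        rw [hmemB] at hj
        show p - (((p - ((j : ZMod p)⁻¹).val : ℕ) : ZMod p))⁻¹.val = j
        rw [hgval j hj.1 (by omega)]
        omega
    rw [Finset.sum_const, nsmul_eq_mul, mul_one] at hsum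
    have := (ZMod.natCast_eq_zero_iff B.card 2).mp hsum
    exact this
  obtain ⟨k, hk⟩ := hBeven
  -- the field K with a sqrt of -1
  set K := GaloisField p 2 with hKdef
  haveI : Fintype K := Fintype.ofFinite K
  obtain ⟨i, hi⟩ : IsSquare (-1 : K) := by
    rw [FiniteField.isSquare_neg_one_iff]
    rw [← Nat.card_eq_fintype_card, hKdef, GaloisField.card p 2 two_ne_zero,
      Nat.pow_mod, h3]
    decide
  set φ : ZMod p →+* K := algebraMap (ZMod p) K with hφ
  have hinj : Function.Injective φ := φ.injective
  have hnatφ : ∀ j : ℕ, (j : K) = φ (j : ZMod p) := fun j => (map_natCast φ j).symm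
  -- product over B, twisted by i, is 1
  have hprodBi : (∏ j ∈ B, ((j : K) * i)) = 1 := by
    refine Finset.prod_involution (fun j _ => p - ((j : ZMod p)⁻¹).val) ?_ ?_ ?_ ?_
    · intro j hj
      rw [hmemB] at hj
      have h1 : 1 ≤ j := hj.1
      have hjp : j < p := by omega
      show (j : K) * i * (((p - ((j : ZMod p)⁻¹).val : ℕ) : K) * i) = 1
      have hc : (((p - ((j : ZMod p)⁻¹).val : ℕ) : ZMod p)) = -(j : ZMod p)⁻¹ := by
        rw [hsubcast _ (le_of_lt (hIlt j)), hIcast]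
      have hzp : (j : ZMod p) * (((p - ((j : ZMod p)⁻¹).val : ℕ) : ZMod p)) = -1 := by
        rw [hc, mul_neg, mul_inv_cancel₀ (hne j h1 hjp)]
      calc (j : K) * i * (((p - ((j : ZMod p)⁻¹).val : ℕ) : K) * i)
          = φ ((j : ZMod p) * (((p - ((j : ZMod p)⁻¹).val : ℕ) : ZMod p))) * (i * i) := by
            rw [map_mul, hnatφ, hnatφ]; ring
        _ = 1 := by rw [hzp, ← hi, map_neg, map_one]; ring
    · intro j hj hfj heq
      rw [hmemB] at hj
      have heq' : p - ((j : ZMod p)⁻¹).val = j := heq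
      have hIub : ((j : ZMod p)⁻¹).val < p := hIlt j
      exact hneginv j hj.1 (by omega) (by omega)
    · intro j hj
      rw [hmemB] at hj
      show p - ((j : ZMod p)⁻¹).val ∈ B
      rw [hmemB]
      have hIub : ((j : ZMod p)⁻¹).val < p := hIlt j
      have hIlb : 1 ≤ ((j : ZMod p)⁻¹).val := hIpos j hj.1 (by omega)
      have hnot := hj.2.2
      refine ⟨by omega, by omega, ?_⟩
      rw [hgval j hj.1 (by omega)]
      omega
    · intro j hj
      rw [hmemB] at hj
      show p - (((p - ((j : ZMod p)⁻¹).val : ℕ) : ZMod p))⁻¹.val = j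
      rw [hgval j hj.1 (by omega)]
      omega
  -- extract the product over B in ZMod p
  have hprodB : (∏ j ∈ B, (j : ZMod p)) = (-1) ^ k := by
    have hsplit : (∏ j ∈ B, ((j : K) * i)) = (∏ j ∈ B, (j : K)) * i ^ B.card := by
      rw [Finset.prod_mul_distrib, Finset.prod_const]
    have hik : i ^ B.card = (-1 : K) ^ k := by
      rw [hk, pow_mul, sq, ← hi]
    have h1 : (∏ j ∈ B, (j : K)) * (-1 : K) ^ k = 1 := by
      rw [← hik, ← hsplit, hprodBi]
    have h2 : ((-1 : K) ^ k) * ((-1 : K) ^ k) = 1 := by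
      rw [← pow_add]
      exact Even.neg_one_pow ⟨k, rfl⟩
    have h3' : (∏ j ∈ B, (j : K)) = (-1 : K) ^ k :=
      mul_right_cancel₀ (pow_ne_zero k (neg_ne_zero.mpr one_ne_zero)) (by rw [h1, h2])
    apply hinj
    rw [map_prod, map_pow, map_neg, map_one]
    rw [show (∏ j ∈ B, φ (j : ZMod p)) = ∏ j ∈ B, (j : K) from
      Finset.prod_congr rfl (fun j _ => (hnatφ j).symm)]
    exact h3'
  -- factorial value
  have hfact : ((Nat.factorial m : ℕ) : ZMod p) = (-1) ^ k := by
    have hsplit := Finset.prod_filter_mul_prod_filter_not (Finset.Ico 1 (m + 1))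
      (fun j : ℕ => 2 * ((j : ZMod p)⁻¹.val) < p) (fun j : ℕ => (j : ZMod p))
    rw [← Finset.prod_Ico_id_eq_factorial, Nat.cast_prod, ← hsplit, ← hA, ← hB,
      hprodA, hprodB, one_mul]
  -- double factorial
  have hdf : ((Nat.doubleFactorial (p - 1) : ℕ) : ZMod p) = (2 : ZMod p) ^ m * (-1) ^ k := by
    have h2m' : p - 1 = 2 * m := by omega
    rw [h2m', Nat.doubleFactorial_two_mul, Nat.cast_mul, Nat.cast_pow, hfact]
    norm_num
  -- value of 2^m
  have h2m : ((legendreSym p 2 : ℤ) : ZMod p) = (2 : ZMod p) ^ m := by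
    have h := legendreSym.eq_pow p 2
    rw [h, hmdef]
    push_cast
    ring
  have hval : legendreSym p 2 = (if p % 8 = 1 ∨ p % 8 = 7 then 1 else -1) := by
    rw [legendreSym.at_two (by omega), ZMod.χ₈_nat_eq_if_mod_eight]
    have h2 : ¬ (p % 2 = 0) := by omega
    simp [h2]
  have hμk : μ + 2 * k = m := by omega
  rw [hdf]
  have h8 : p % 8 = 3 ∨ p % 8 = 7 := by omega
  rcases h8 with h8 | h8
  · have hv : (2 : ZMod p) ^ m = -1 := by
      rw [← h2m, hval]
      norm_num [h8]
    rw [hv]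
    have hmod : ((μ + 1) / 2) % 2 = (k + 1) % 2 := by omega
    calc (-1 : ZMod p) * (-1) ^ k = (-1) ^ (k + 1) := by ring
      _ = (-1) ^ ((k + 1) % 2) := neg_one_pow_eq_pow_mod_two _
      _ = (-1) ^ (((μ + 1) / 2) % 2) := by rw [hmod]
      _ = (-1) ^ ((μ + 1) / 2) := (neg_one_pow_eq_pow_mod_two _).symm
  · have hv : (2 : ZMod p) ^ m = 1 := by
      rw [← h2m, hval]
      norm_num [h8]
    rw [hv, one_mul]
    have hmod : ((μ + 1) / 2) % 2 = k % 2 := by omega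
    calc (-1 : ZMod p) ^ k = (-1) ^ (k % 2) := neg_one_pow_eq_pow_mod_two _
      _ = (-1) ^ (((μ + 1) / 2) % 2) := by rw [hmod]
      _ = (-1) ^ ((μ + 1) / 2) := (neg_one_pow_eq_pow_mod_two _).symm
end

section
/- Let p be a prime with p ≡ 1 (mod 4), let μ be the number of j with 1 ≤ j < p/2 whose inverse modulo p (as a representative in {1,...,p-1}) is also less than p/2, and let i_p be the unique natural number less than p/2 with i_p^2 ≡ -1 (mod p). Then (p-1)!! ≡ (-1)^((μ+1)/2) · i_p (mod p). -/
open Finset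

lemma aux_prod {α M : Type*} [CommMonoid M] [DecidableEq α] (c : M) :
    ∀ n (s : Finset α), s.card = n → ∀ (σ : α → α) (f : α → M),
      (∀ a ∈ s, σ a ∈ s) → (∀ a ∈ s, σ (σ a) = a) → (∀ a ∈ s, σ a ≠ a) →
      (∀ a ∈ s, f a * f (σ a) = c) →
      (∏ a ∈ s, f a = c ^ (s.card / 2)) ∧ s.card % 2 = 0 := by
  intro n
  induction n using Nat.strong_induction_on with
  | _ n ih =>
    intro s hcard σ f hmem hinv hne hc
    rcases s.eq_empty_or_nonempty with rfl | ⟨a, ha⟩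
    · simp
    · have hσa : σ a ∈ s := hmem a ha
      have hane : σ a ≠ a := hne a ha
      set s' := s \ {a, σ a} with hs'
      have hsub : {a, σ a} ⊆ s := by
        intro x hx; simp at hx; rcases hx with rfl | rfl <;> assumption
      have hcard2 : ({a, σ a} : Finset α).card = 2 := by
        rw [card_insert_of_notMem (by simpa using fun h => hane h.symm), card_singleton]
      have hcard' : s'.card = s.card - 2 := by
        rw [hs', card_sdiff_of_subset hsub, hcard2]
      have hle : 2 ≤ s.card := by
        calc 2 = ({a, σ a} : Finset α).card := hcard2.symm
        _ ≤ s.card := card_le_card hsub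
      have hmem' : ∀ b ∈ s', σ b ∈ s' := by
        intro b hb
        rw [hs', mem_sdiff] at hb ⊢
        obtain ⟨hbs, hbn⟩ := hb
        simp only [mem_insert, mem_singleton] at hbn ⊢
        push_neg at hbn ⊢
        refine ⟨hmem b hbs, ?_, ?_⟩
        · intro h; exact hbn.2 (by rw [← hinv b hbs, h])
        · intro h
          have hba : b = a := by
            have := hinv b hbs
            rw [h] at this; rw [← this, hinv a ha]
          exact hbn.1 hba
      have hres : s' ⊆ s := sdiff_subset
      obtain ⟨hp1, hp2⟩ := ih (s.card - 2) (by omega) s' hcard' σ f hmem'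
        (fun b hb => hinv b (hres hb)) (fun b hb => hne b (hres hb))
        (fun b hb => hc b (hres hb))
      have hsplit : s = {a, σ a} ∪ s' := by
        rw [hs', Finset.union_sdiff_of_subset hsub]
      have hdisj : Disjoint ({a, σ a} : Finset α) s' := by
        rw [hs']; exact disjoint_sdiff
      constructor
      · rw [hsplit, prod_union hdisj, prod_pair (fun h => hane h.symm), hp1, hc a ha,
          hcard', ← hsplit]
        have : s.card / 2 = (s.card - 2) / 2 + 1 := by omega
        rw [this, pow_succ, mul_comm]
      · rw [hcard'] at hp2; omega

lemma two_pow_half (p : ℕ) (hp : p.Prime) (h1 : p % 4 = 1) :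
    (2 : ZMod p) ^ ((p - 1) / 2) = (-1 : ZMod p) ^ ((p - 1) / 4) := by
  haveI : Fact p.Prime := ⟨hp⟩
  have hp2 : p ≠ 2 := by omega
  have h5 : 5 ≤ p := by have := hp.two_le; omega
  have hdiv : p / 2 = (p - 1) / 2 := by omega
  have := legendreSym.eq_pow p 2
  rw [legendreSym.at_two hp2, ZMod.χ₈_nat_eq_if_mod_eight] at this
  have h8 : p % 8 = 1 ∨ p % 8 = 5 := by omega
  have hodd : ¬ (p % 2 = 0) := by omega
  rcases h8 with h8 | h8
  · rw [if_neg hodd, if_pos (Or.inl h8)] at this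
    push_cast at this
    rw [hdiv] at this
    rw [← this]
    have he : (p - 1) / 4 % 2 = 0 := by omega
    rw [Even.neg_one_pow (Nat.even_iff.mpr he)]
  · rw [if_neg hodd, if_neg (by omega)] at this
    push_cast at this
    rw [hdiv] at this
    rw [← this]
    have he : (p - 1) / 4 % 2 = 1 := by omega
    rw [Odd.neg_one_pow (Nat.odd_iff.mpr he)]

theorem stmt8 (p : ℕ) (hp : p.Prime) (h1 : p % 4 = 1)
    (μ : ℕ)
    (hμ : μ = ((Finset.Ico 1 p).filter
      (fun j => 2 * j < p ∧ 2 * ((j : ZMod p)⁻¹.val) < p)).card)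
    (ip : ℕ) (hip1 : 2 * ip < p) (hip2 : (ip : ZMod p) ^ 2 = -1) :
    (Nat.doubleFactorial (p - 1) : ZMod p) = (-1) ^ ((μ + 1) / 2) * (ip : ZMod p) := by
  classical
  haveI : Fact p.Prime := ⟨hp⟩
  have h5 : 5 ≤ p := by have := hp.two_le; omega
  set N := (p - 1) / 2 with hN
  have hpN : p = 2 * N + 1 := by omega
  -- basic cast tools
  have hnz : ∀ j : ℕ, 1 ≤ j → j < p → (j : ZMod p) ≠ 0 := by
    intro j hj1 hjp h0
    rw [ZMod.natCast_eq_zero_iff] at h0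
    exact absurd (Nat.le_of_dvd (by omega) h0) (by omega)
  have hval : ∀ x : ZMod p, ((x.val : ℕ) : ZMod p) = x := fun x => ZMod.natCast_rightInverse x
  have hinj : ∀ a b : ℕ, a < p → b < p → (a : ZMod p) = (b : ZMod p) → a = b := by
    intro a b hap hbp h
    have := congrArg ZMod.val h
    rwa [ZMod.val_cast_of_lt hap, ZMod.val_cast_of_lt hbp] at this
  have hsubcast : ∀ a : ℕ, a < p → (((p - a : ℕ)) : ZMod p) = -(a : ZMod p) := by
    intro a hap
    have : ((p - a : ℕ) : ZMod p) = ((p : ℕ) : ZMod p) - (a : ZMod p) :=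
      Nat.cast_sub (le_of_lt hap)
    rw [this, ZMod.natCast_self, zero_sub]
  -- the inverse representative
  set inv : ℕ → ℕ := fun j => ((j : ZMod p)⁻¹).val with hinvdef
  have hinvlt : ∀ j : ℕ, inv j < p := fun j => ZMod.val_lt _
  have hinvcast : ∀ j : ℕ, ((inv j : ℕ) : ZMod p) = (j : ZMod p)⁻¹ := fun j => hval _
  have hinvpos : ∀ j : ℕ, 1 ≤ j → j < p → 1 ≤ inv j := by
    intro j hj1 hjp
    rcases Nat.eq_zero_or_pos (inv j) with h0 | h
    · exfalso
      have : ((j : ZMod p)⁻¹).val = 0 := h0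
      rw [ZMod.val_eq_zero, inv_eq_zero] at this
      exact hnz j hj1 hjp this
    · exact h
  have hinvne : ∀ j : ℕ, 2 * inv j ≠ p := by
    intro j h; omega
  have hmul : ∀ j : ℕ, 1 ≤ j → j < p → (j : ZMod p) * ((inv j : ℕ) : ZMod p) = 1 := by
    intro j hj1 hjp
    rw [hinvcast j, mul_inv_cancel₀ (hnz j hj1 hjp)]
  -- ip facts
  have hipc : (ip : ZMod p) ≠ 0 := by
    intro h; rw [h] at hip2; norm_num at hip2
  have hip1' : 1 ≤ ip := by
    rcases Nat.eq_zero_or_pos ip with h0 | h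
    · exfalso; apply hipc; rw [h0]; simp
    · exact h
  have hipN : ip ≤ N := by omega
  have hipinv : ((ip : ZMod p))⁻¹ = -(ip : ZMod p) := by
    apply inv_eq_of_mul_eq_one_right
    have h : (ip : ZMod p) * -(ip : ZMod p) = -((ip : ZMod p) ^ 2) := by ring
    rw [h, hip2]; ring
  have hinvip : inv ip = p - ip := by
    have : ((inv ip : ℕ) : ZMod p) = (((p - ip : ℕ)) : ZMod p) := by
      rw [hinvcast, hipinv, hsubcast ip (by omega)]
    exact hinj _ _ (hinvlt ip) (by omega) this
  -- sigma
  set σ : ℕ → ℕ := fun j => if 2 * inv j < p then inv j else p - inv j with hσdef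
  have hσ1 : σ 1 = 1 := by
    have h11 : inv 1 = 1 := by
      apply hinj _ _ (hinvlt 1) (by omega)
      rw [hinvcast]; norm_num
    rw [hσdef]; simp only [h11]; rw [if_pos (by omega)]
  have hσip : σ ip = ip := by
    rw [hσdef]; simp only [hinvip]; rw [if_neg (by omega)]; omega
  have hinv1 : inv 1 = 1 := by
    apply hinj _ _ (hinvlt 1) (by omega)
    rw [hinvcast]; norm_num
  -- main structure facts
  have hmain : ∀ j : ℕ, 1 ≤ j → j ≤ N →
      (1 ≤ σ j ∧ σ j ≤ N) ∧ σ (σ j) = j ∧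
      ((2 * inv j < p → (((σ j : ℕ) : ZMod p) = (j : ZMod p)⁻¹ ∧ 2 * inv (σ j) < p)) ∧
       (¬ 2 * inv j < p → (((σ j : ℕ) : ZMod p) = -((j : ZMod p)⁻¹) ∧ ¬ 2 * inv (σ j) < p))) := by
    intro j hj1 hjN
    have hjp : j < p := by omega
    have hk1 : 1 ≤ inv j := hinvpos j hj1 hjp
    have hkp : inv j < p := hinvlt j
    by_cases hε : 2 * inv j < p
    · have hσj : σ j = inv j := by rw [hσdef]; simp only []; rw [if_pos hε]
      have hinvσ : inv (σ j) = j := by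
        apply hinj _ _ (hinvlt _) hjp
        rw [hinvcast, hσj, hinvcast, inv_inv]
      have hεσ : 2 * inv (σ j) < p := by rw [hinvσ]; omega
      refine ⟨⟨by omega, by omega⟩, ?_, ?_, fun h => absurd hε h⟩
      · have hs2 : σ (σ j) = inv (σ j) := by
          rw [hσdef]; simp only []; rw [if_pos hεσ]
        rw [hs2, hinvσ]
      · intro _; exact ⟨by rw [hσj, hinvcast], hεσ⟩
    · have hεd : p < 2 * inv j := by have := hinvne j; omega
      have hσj : σ j = p - inv j := by rw [hσdef]; simp only []; rw [if_neg hε]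
      have hcastσ : ((σ j : ℕ) : ZMod p) = -((j : ZMod p)⁻¹) := by
        rw [hσj, hsubcast _ hkp, hinvcast]
      have hinvσ : inv (σ j) = p - j := by
        apply hinj _ _ (hinvlt _) (by omega)
        rw [hinvcast, hcastσ, hsubcast _ hjp, inv_neg, inv_inv]
      refine ⟨⟨by omega, by omega⟩, ?_, ?_, ?_⟩
      · have : ¬ 2 * inv (σ j) < p := by rw [hinvσ]; omega
        rw [hσdef]; simp only []
        rw [if_neg this, hinvσ]
        omega
      · intro h; exact absurd h hε
      · intro _; exact ⟨hcastσ, by rw [hinvσ]; omega⟩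
  -- square root characterizations
  have hsq1 : ∀ j : ℕ, j < p → ((j : ZMod p)) ^ 2 = 1 → j = 1 ∨ j = p - 1 := by
    intro j hjp hsq
    have h0 : ((j : ZMod p) - 1) * ((j : ZMod p) + 1) = 0 := by
      have : ((j : ZMod p) - 1) * ((j : ZMod p) + 1) = (j : ZMod p) ^ 2 - 1 := by ring
      rw [this, hsq]; ring
    rcases mul_eq_zero.mp h0 with h | h
    · left; apply hinj j 1 hjp (by omega)
      rw [sub_eq_zero] at h; simpa using h
    · right; apply hinj j (p - 1) hjp (by omega)
      have hj : (j : ZMod p) = -1 := eq_neg_of_add_eq_zero_left h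
      rw [hj, hsubcast 1 (by omega)]; norm_num
  have hsqneg : ∀ j : ℕ, j < p → ((j : ZMod p)) ^ 2 = -1 → j = ip ∨ j = p - ip := by
    intro j hjp hsq
    have h0 : ((j : ZMod p) - (ip : ZMod p)) * ((j : ZMod p) + (ip : ZMod p)) = 0 := by
      have : ((j : ZMod p) - ip) * ((j : ZMod p) + ip) = (j : ZMod p) ^ 2 - (ip : ZMod p) ^ 2 := by
        ring
      rw [this, hsq, hip2]; ring
    rcases mul_eq_zero.mp h0 with h | h
    · left; exact hinj j ip hjp (by omega) (by rwa [sub_eq_zero] at h)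
    · right; apply hinj j (p - ip) hjp (by omega)
      have hj : (j : ZMod p) = -(ip : ZMod p) := eq_neg_of_add_eq_zero_left h
      rw [hj, hsubcast ip (by omega)]
  -- fixed points
  have hfixA : ∀ j : ℕ, 1 ≤ j → j ≤ N → 2 * inv j < p → σ j = j → j = 1 := by
    intro j hj1 hjN hε hfix
    have hjp : j < p := by omega
    have hσj : σ j = inv j := by rw [hσdef]; simp only []; rw [if_pos hε]
    have hij : inv j = j := by rw [← hσj, hfix]
    have hm := hmul j hj1 hjp
    rw [hij] at hm
    have hsq : ((j : ZMod p)) ^ 2 = 1 := by rw [sq]; exact hm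
    rcases hsq1 j hjp hsq with h | h
    · exact h
    · exfalso; omega
  have hfixB : ∀ j : ℕ, 1 ≤ j → j ≤ N → ¬ 2 * inv j < p → σ j = j → j = ip := by
    intro j hj1 hjN hε hfix
    have hjp : j < p := by omega
    have hσj : σ j = p - inv j := by rw [hσdef]; simp only []; rw [if_neg hε]
    have hij : inv j = p - j := by
      have h2 : p - inv j = j := by rw [← hσj, hfix]
      have := hinvlt j; omega
    have hm := hmul j hj1 hjp
    rw [hij, hsubcast j hjp] at hm
    have hsq : ((j : ZMod p)) ^ 2 = -1 := by linear_combination -hm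
    rcases hsqneg j hjp hsq with h | h
    · exact h
    · exfalso; omega
  -- the sets
  set H : Finset ℕ := Finset.Ico 1 (N + 1) with hH
  set A := H.filter (fun j => 2 * inv j < p) with hA
  set B := H.filter (fun j => ¬ 2 * inv j < p) with hB
  have h1A : (1 : ℕ) ∈ A := by
    simp only [hA, Finset.mem_filter, hH, Finset.mem_Ico]
    exact ⟨⟨le_refl 1, by omega⟩, by rw [hinv1]; omega⟩
  have hipB : ip ∈ B := by
    simp only [hB, Finset.mem_filter, hH, Finset.mem_Ico]
    exact ⟨⟨hip1', by omega⟩, by rw [hinvip]; omega⟩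
  have hcardH : H.card = N := by rw [hH, Nat.card_Ico]; omega
  have hcardA : A.card = μ := by
    rw [hμ]
    congr 1
    ext j
    simp only [hA, hH, Finset.mem_filter, Finset.mem_Ico, hinvdef]
    constructor
    · rintro ⟨⟨ha, hb⟩, hd⟩; exact ⟨⟨ha, by omega⟩, by omega, hd⟩
    · rintro ⟨⟨ha, hb⟩, _, hd⟩; exact ⟨⟨ha, by omega⟩, hd⟩
  have hcardAB : A.card + B.card = H.card :=
    Finset.card_filter_add_card_filter_not (fun j => 2 * inv j < p)
  have hμleN : μ ≤ N := by omega
  have hcardB : B.card = N - μ := by omega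
  set t := A.erase 1 with ht
  set u := B.erase ip with hu
  have hcardt : t.card = μ - 1 := by rw [ht, Finset.card_erase_of_mem h1A, hcardA]
  have hcardu : u.card = N - μ - 1 := by rw [hu, Finset.card_erase_of_mem hipB, hcardB]
  have hμpos : 1 ≤ μ := by
    rw [← hcardA]; exact Finset.card_pos.mpr ⟨1, h1A⟩
  have hμ1N : μ + 1 ≤ N := by
    have : 1 ≤ B.card := Finset.card_pos.mpr ⟨ip, hipB⟩
    omega
  -- closure properties for t
  have htmem' : ∀ j ∈ t, j ≠ 1 ∧ (1 ≤ j ∧ j ≤ N) ∧ 2 * inv j < p := by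
    intro j hj
    simp only [ht, Finset.mem_erase, hA, Finset.mem_filter, hH, Finset.mem_Ico] at hj
    exact ⟨hj.1, ⟨hj.2.1.1, by omega⟩, hj.2.2⟩
  have htclosed : ∀ j ∈ t, σ j ∈ t := by
    intro j hj
    obtain ⟨hne1, ⟨hj1, hjN⟩, hε⟩ := htmem' j hj
    obtain ⟨⟨hs1, hsN⟩, hinvol, hposc, _⟩ := hmain j hj1 hjN
    obtain ⟨hcast, hεσ⟩ := hposc hε
    simp only [ht, Finset.mem_erase, hA, Finset.mem_filter, hH, Finset.mem_Ico]
    refine ⟨?_, ⟨hs1, by omega⟩, hεσ⟩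
    intro h
    apply hne1
    rw [← hinvol, h, hσ1]
  have htinv : ∀ j ∈ t, σ (σ j) = j := by
    intro j hj
    obtain ⟨_, ⟨hj1, hjN⟩, _⟩ := htmem' j hj
    exact (hmain j hj1 hjN).2.1
  have htne : ∀ j ∈ t, σ j ≠ j := by
    intro j hj h
    obtain ⟨hne1, ⟨hj1, hjN⟩, hε⟩ := htmem' j hj
    exact hne1 (hfixA j hj1 hjN hε h)
  have htc : ∀ j ∈ t, (j : ZMod p) * ((σ j : ℕ) : ZMod p) = 1 := by
    intro j hj
    obtain ⟨_, ⟨hj1, hjN⟩, hε⟩ := htmem' j hj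
    obtain ⟨hcast, _⟩ := (hmain j hj1 hjN).2.2.1 hε
    rw [hcast, mul_inv_cancel₀ (hnz j hj1 (by omega))]
  -- closure properties for u
  have humem' : ∀ j ∈ u, j ≠ ip ∧ (1 ≤ j ∧ j ≤ N) ∧ ¬ 2 * inv j < p := by
    intro j hj
    simp only [hu, Finset.mem_erase, hB, Finset.mem_filter, hH, Finset.mem_Ico] at hj
    exact ⟨hj.1, ⟨hj.2.1.1, by omega⟩, hj.2.2⟩
  have huclosed : ∀ j ∈ u, σ j ∈ u := by
    intro j hj
    obtain ⟨hneip, ⟨hj1, hjN⟩, hε⟩ := humem' j hj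
    obtain ⟨⟨hs1, hsN⟩, hinvol, _, hnegc⟩ := hmain j hj1 hjN
    obtain ⟨hcast, hεσ⟩ := hnegc hε
    simp only [hu, Finset.mem_erase, hB, Finset.mem_filter, hH, Finset.mem_Ico]
    refine ⟨?_, ⟨hs1, by omega⟩, hεσ⟩
    intro h
    apply hneip
    rw [← hinvol, h, hσip]
  have huinv : ∀ j ∈ u, σ (σ j) = j := by
    intro j hj
    obtain ⟨_, ⟨hj1, hjN⟩, _⟩ := humem' j hj
    exact (hmain j hj1 hjN).2.1
  have hune : ∀ j ∈ u, σ j ≠ j := by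
    intro j hj h
    obtain ⟨hneip, ⟨hj1, hjN⟩, hε⟩ := humem' j hj
    exact hneip (hfixB j hj1 hjN hε h)
  have huc : ∀ j ∈ u, (j : ZMod p) * ((σ j : ℕ) : ZMod p) = -1 := by
    intro j hj
    obtain ⟨_, ⟨hj1, hjN⟩, hε⟩ := humem' j hj
    obtain ⟨hcast, _⟩ := (hmain j hj1 hjN).2.2.2 hε
    rw [hcast]
    have : (j : ZMod p) * -((j : ZMod p))⁻¹ = -((j : ZMod p) * ((j : ZMod p))⁻¹) := by ring
    rw [this, mul_inv_cancel₀ (hnz j hj1 (by omega))]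
  -- products
  obtain ⟨hprodt, hpart⟩ := aux_prod (1 : ZMod p) t.card t rfl σ
    (fun j => ((j : ℕ) : ZMod p)) htclosed htinv htne htc
  obtain ⟨hprodu, hparu⟩ := aux_prod (-1 : ZMod p) u.card u rfl σ
    (fun j => ((j : ℕ) : ZMod p)) huclosed huinv hune huc
  rw [one_pow] at hprodt
  have h1nt : (1 : ℕ) ∉ t := Finset.notMem_erase _ _
  have hipnu : ip ∉ u := Finset.notMem_erase _ _
  have hprodA : ∏ j ∈ A, (j : ZMod p) = 1 := by
    rw [show A = insert 1 t from (Finset.insert_erase h1A).symm,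
      Finset.prod_insert h1nt, hprodt]
    norm_num
  have hprodB : ∏ j ∈ B, (j : ZMod p) = (ip : ZMod p) * (-1) ^ ((N - μ - 1) / 2) := by
    rw [show B = insert ip u from (Finset.insert_erase hipB).symm,
      Finset.prod_insert hipnu, hprodu, hcardu]
  have hprodH : ∏ j ∈ H, (j : ZMod p) = (ip : ZMod p) * (-1) ^ ((N - μ - 1) / 2) := by
    rw [← Finset.prod_filter_mul_prod_filter_not H (fun j => 2 * inv j < p)
      (fun j => ((j : ℕ) : ZMod p)), ← hA, ← hB, hprodA, hprodB, one_mul]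
  have hfact : ((Nat.factorial N : ℕ) : ZMod p) = (ip : ZMod p) * (-1) ^ ((N - μ - 1) / 2) := by
    rw [← Finset.prod_Ico_id_eq_factorial N, Nat.cast_prod, ← hH, hprodH]
  -- double factorial
  have hdf : ((Nat.doubleFactorial (p - 1) : ℕ) : ZMod p)
      = (2 : ZMod p) ^ N * ((Nat.factorial N : ℕ) : ZMod p) := by
    rw [show p - 1 = 2 * N by omega, Nat.doubleFactorial_two_mul]
    push_cast
    ring
  -- parity bookkeeping
  have hμodd : μ % 2 = 1 := by omega
  have hueven : (N - μ - 1) % 2 = 0 := by omega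
  have hexp : (p - 1) / 4 = (N - μ - 1) / 2 + (μ + 1) / 2 := by omega
  have h2pow := two_pow_half p hp h1
  rw [← hN] at h2pow
  rw [hexp] at h2pow
  have key : (2 : ZMod p) ^ N * (-1 : ZMod p) ^ ((N - μ - 1) / 2) = (-1) ^ ((μ + 1) / 2) := by
    rw [h2pow, ← pow_add]
    rw [show (N - μ - 1) / 2 + (μ + 1) / 2 + (N - μ - 1) / 2
      = 2 * ((N - μ - 1) / 2) + (μ + 1) / 2 by ring]
    rw [pow_add, pow_mul]
    norm_num
  calc ((Nat.doubleFactorial (p - 1) : ℕ) : ZMod p)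
      = (2 : ZMod p) ^ N * ((Nat.factorial N : ℕ) : ZMod p) := hdf
    _ = (2 : ZMod p) ^ N * ((ip : ZMod p) * (-1) ^ ((N - μ - 1) / 2)) := by rw [hfact]
    _ = ((2 : ZMod p) ^ N * (-1) ^ ((N - μ - 1) / 2)) * (ip : ZMod p) := by ring
    _ = (-1) ^ ((μ + 1) / 2) * (ip : ZMod p) := by rw [key]
end

section
/- For an odd prime p, the hyperfactorial H(p-1) = ∏_{k=1}^{p-1} k^k satisfies H(p-1) ≡ (-1)^((p-1)/2) · (p-1)!! (mod p). -/
/-!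
Write `p = 2m + 1`. Pairing `k` with `p - k ≡ -k` and using Fermat's `k ^ p = k` gives
`k ^ k * (p - k) ^ (p - k) ≡ (-1) ^ (k + 1) * k`, hence `H(p - 1) ≡ (-1) ^ ⌊m/2⌋ * m!`.
On the other side `(p - 1)‼ = 2 ^ m * m!`, and Gauss's lemma for the residue `2` gives
`2 ^ m ≡ (-1) ^ (m - ⌊m/2⌋)`, the exponent counting the `x ≤ m` with `2x > m`.
The two signs differ by exactly `(-1) ^ m`.
-/

def hyperfactorial (n : ℕ) : ℕ := ∏ k ∈ Finset.Icc 1 n, k ^ k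

open Finset Nat

theorem Finset.prod_Icc_two_mul_eq_prod_mul_reflect {M : Type*} [CommMonoid M] (f : ℕ → M)
    (m : ℕ) : ∏ k ∈ Icc 1 (2 * m), f k = ∏ k ∈ Icc 1 m, f k * f (2 * m + 1 - k) := by
  rw [prod_mul_distrib, ← Ico_add_one_right_eq_Icc, ← Ico_add_one_right_eq_Icc,
    prod_Ico_reflect f 1 (n := 2 * m + 1) (by omega),
    show 2 * m + 1 + 1 - (m + 1) = m + 1 by omega, Nat.add_sub_cancel,
    prod_Ico_consecutive f (by omega) (by omega)]

theorem prod_Icc_neg_one_pow_succ_mul {R : Type*} [CommRing R] (m : ℕ) :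
    ∏ k ∈ Icc 1 m, ((-1 : R) ^ (k + 1) * k) = (-1) ^ (m / 2) * m ! := by
  induction m with
  | zero => simp
  | succ m ih =>
    have hsign : (-1 : R) ^ ((m + 1) / 2) = (-1) ^ (m / 2) * (-1) ^ (m + 1 + 1) := by
      rw [← pow_add]
      exact neg_one_pow_congr (by grind)
    rw [prod_Icc_succ_top (by omega), ih, hsign, factorial_succ, cast_mul, cast_succ]
    ring

theorem ZMod.pow_self_mul_sub_pow_sub_self {p : ℕ} [Fact p.Prime] {k : ℕ} (hk : k ≤ p) :
    (k : ZMod p) ^ k * ((p - k : ℕ) : ZMod p) ^ (p - k) = (-1) ^ (p - k) * k := by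
  rw [Nat.cast_sub hk, ZMod.natCast_self, zero_sub, neg_pow, mul_left_comm, ← pow_add,
    Nat.add_sub_cancel' hk, ZMod.pow_card]

theorem hyperfactorial_two_mul_cast_zmod (m : ℕ) [Fact (2 * m + 1).Prime] :
    (hyperfactorial (2 * m) : ZMod (2 * m + 1)) = (-1) ^ (m / 2) * m ! := by
  rw [hyperfactorial, Nat.cast_prod, ← prod_Icc_neg_one_pow_succ_mul,
    prod_Icc_two_mul_eq_prod_mul_reflect]
  refine prod_congr rfl fun k hk => ?_
  have hkm : k ≤ m := (mem_Icc.1 hk).2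
  push_cast
  rw [ZMod.pow_self_mul_sub_pow_sub_self (by omega),
    neg_one_pow_congr (m := 2 * m + 1 - k) (n := k + 1) (by grind)]

theorem ZMod.two_pow_eq_neg_one_pow (m : ℕ) [hp : Fact (2 * m + 1).Prime] :
    (2 : ZMod (2 * m + 1)) ^ m = (-1) ^ (m - m / 2) := by
  have htwo : ((2 : ℤ) : ZMod (2 * m + 1)) ≠ 0 := by
    have hndvd : ¬2 * m + 1 ∣ 2 := fun h => by
      have := Nat.le_of_dvd two_pos h
      have := hp.out.two_le
      omega
    exact_mod_cast (ZMod.natCast_eq_zero_iff 2 (2 * m + 1)).not.mpr hndvd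
  have hgauss := ZMod.gauss_lemma_aux (2 * m + 1) htwo
  rw [show (2 * m + 1) / 2 = m by omega] at hgauss
  simp only [Nat.succ_eq_add_one] at hgauss
  push_cast at hgauss
  have hval : ∀ x ≤ m, (2 * (x : ZMod (2 * m + 1))).val = 2 * x := fun x hx => by
    rw [show 2 * (x : ZMod (2 * m + 1)) = ((2 * x : ℕ) : ZMod (2 * m + 1)) by push_cast; ring,
      ZMod.val_natCast_of_lt (by omega)]
  have hcount :
      {x ∈ Ico 1 (m + 1) | m < (2 * ((x : ℕ) : ZMod (2 * m + 1))).val} = Ioc (m / 2) m := by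
    ext x
    simp only [mem_filter, mem_Ico, mem_Ioc]
    constructor
    · rintro ⟨hx, hmx⟩
      rw [hval x (by omega)] at hmx
      omega
    · rintro hx
      rw [hval x hx.2]
      omega
  rw [hgauss, hcount, card_Ioc]

theorem doubleFactorial_two_mul_cast_zmod (m : ℕ) [Fact (2 * m + 1).Prime] :
    ((2 * m)‼ : ZMod (2 * m + 1)) = (-1) ^ (m - m / 2) * m ! := by
  rw [doubleFactorial_two_mul, cast_mul, cast_pow, cast_ofNat, ZMod.two_pow_eq_neg_one_pow]

theorem stmt10 (p : ℕ) (hp : p.Prime) (hodd : Odd p) :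
    (hyperfactorial (p - 1) : ZMod p) =
      (-1) ^ ((p - 1) / 2) * (Nat.doubleFactorial (p - 1) : ZMod p) := by
  obtain ⟨m, rfl⟩ := hodd
  have := Fact.mk hp
  rw [Nat.add_sub_cancel, Nat.mul_div_cancel_left m two_pos, hyperfactorial_two_mul_cast_zmod,
    doubleFactorial_two_mul_cast_zmod, ← mul_assoc, ← pow_add,
    neg_one_pow_congr (m := m + (m - m / 2)) (n := m / 2) (by grind)]
end

section
/- If n is an odd composite natural number with n > 9, then (n-1)!! ≡ 0 (mod n); moreover 8!! ≡ 6 (mod 9). -/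
lemma aux_dvd_fact (n k : ℕ) (hodd : Odd n) (hcomp : ¬ n.Prime) (hn : 9 < n)
    (hk : k = (n - 1) / 2) : n ∣ Nat.factorial k := by
  have hn1 : n ≠ 1 := by omega
  have hpd : n.minFac ∣ n := Nat.minFac_dvd n
  have hpp : n.minFac.Prime := Nat.minFac_prime hn1
  have hp2 : n.minFac ≠ 2 := by
    intro h
    exact (Nat.not_even_iff_odd.mpr hodd) (even_iff_two_dvd.mpr (h ▸ hpd))
  have hp3 : 3 ≤ n.minFac := by
    have := hpp.two_le; omega
  obtain ⟨m, hm⟩ := hpd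
  set p := n.minFac with hp
  have hm1 : m ≠ 1 := by
    intro h; rw [h, mul_one] at hm; exact hcomp (hm ▸ hpp)
  have hm0 : m ≠ 0 := by rintro rfl; omega
  have hpm : p ≤ m :=
    Nat.minFac_le_of_dvd (by omega) ⟨p, by rw [hm, mul_comm]⟩
  rcases hpm.lt_or_eq with hlt | heq
  · have hmk : m ≤ k := by
      have : 3 * m ≤ n := by
        calc 3 * m ≤ p * m := Nat.mul_le_mul_right m hp3
          _ = n := hm.symm
      omega
    have h1 : p ∣ Nat.factorial (m - 1) := Nat.dvd_factorial hpp.pos (by omega)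
    have h2 : n ∣ Nat.factorial m := by
      have he : Nat.factorial (m - 1) * m = Nat.factorial m := by
        have h : m - 1 + 1 = m := by omega
        conv_rhs => rw [← h]
        rw [Nat.factorial_succ, h, mul_comm]
      rw [← he, hm]
      exact mul_dvd_mul h1 dvd_rfl
    exact h2.trans (Nat.factorial_dvd_factorial hmk)
  · rw [← heq] at hm
    have hp5 : 5 ≤ p := by
      by_contra h
      push_neg at h
      interval_cases p
      · omega
      · exact absurd hpp (by norm_num)
    have h2pk : 2 * p ≤ k := by
      have : 4 * p + 1 ≤ p * p := by nlinarith
      omega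
    have h1 : p ∣ Nat.factorial (2 * p - 1) := Nat.dvd_factorial hpp.pos (by omega)
    have h2 : n ∣ Nat.factorial (2 * p) := by
      have he : Nat.factorial (2 * p - 1) * (2 * p) = Nat.factorial (2 * p) := by
        have h : 2 * p - 1 + 1 = 2 * p := by omega
        conv_rhs => rw [← h]
        rw [Nat.factorial_succ, h, mul_comm]
      rw [← he, hm]
      calc p * p ∣ Nat.factorial (2 * p - 1) * p := mul_dvd_mul h1 dvd_rfl
        _ ∣ Nat.factorial (2 * p - 1) * (2 * p) := by
            exact mul_dvd_mul dvd_rfl ⟨2, by ring⟩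
    exact h2.trans (Nat.factorial_dvd_factorial h2pk)

theorem stmt13 (n : ℕ) (hodd : Odd n) (hcomp : ¬ n.Prime) (hn : 9 < n) :
    (Nat.doubleFactorial (n - 1) : ZMod n) = 0 ∧ Nat.doubleFactorial 8 % 9 = 6 := by
  constructor
  · set k := (n - 1) / 2 with hk
    have h2k : n - 1 = 2 * k := by
      obtain ⟨j, hj⟩ := hodd; omega
    have hdvd : n ∣ Nat.doubleFactorial (n - 1) := by
      rw [h2k, Nat.doubleFactorial_two_mul]
      exact (aux_dvd_fact n k hodd hcomp hn hk).trans (dvd_mul_left _ _)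
    exact (ZMod.natCast_eq_zero_iff _ _).mpr hdvd
  · rfl
end

section
/- If n is an odd composite natural number with n > 9, then ((n-1)/2)! ≡ 0 (mod n). -/
lemma aux_mul_dvd_fact (a b m : ℕ) (ha0 : 0 < a) (hab : a ≠ b)
    (ham : a ≤ m) (hbm : b ≤ m) (hb0 : 0 < b) : a * b ∣ Nat.factorial m := by
  have h : ({a, b} : Finset ℕ) ⊆ Finset.Ico 1 (m + 1) := by
    intro x hx
    simp only [Finset.mem_insert, Finset.mem_singleton] at hx
    rcases hx with rfl | rfl <;> simp [Finset.mem_Ico] <;> omega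
  have hprod : (∏ i ∈ ({a, b} : Finset ℕ), i) = a * b := Finset.prod_pair hab
  have hd := Finset.prod_dvd_prod_of_subset _ _ (fun i => i) h
  rw [hprod, Finset.prod_Ico_id_eq_factorial] at hd
  exact hd

theorem stmt14 (n : ℕ) (hodd : Odd n) (hcomp : ¬ n.Prime) (hn : 9 < n) :
    (Nat.factorial ((n - 1) / 2) : ZMod n) = 0 := by
  rw [ZMod.natCast_eq_zero_iff]
  have hn1 : n ≠ 1 := by omega
  have hpp : n.minFac.Prime := Nat.minFac_prime hn1
  obtain ⟨b, hb⟩ := Nat.minFac_dvd n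
  set p := n.minFac with hp
  have hp2 : 2 ≤ p := hpp.two_le
  have hpodd : p ≠ 2 := by
    intro h
    have h2 : 2 ∣ n := ⟨b, by rw [hb, h]⟩
    rcases hodd with ⟨k, hk⟩
    omega
  have hp3 : 3 ≤ p := by omega
  have hb2 : 2 ≤ b := by
    rcases Nat.lt_or_ge b 2 with h | h
    · interval_cases b
      · omega
      · exact absurd (by rw [hb]; simpa using hpp) hcomp
    · exact h
  have hbdvd : b ∣ n := ⟨p, by rw [hb]; ring⟩
  have hple : p ≤ b := Nat.minFac_le_of_dvd hb2 hbdvd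
  rcases eq_or_lt_of_le hple with heq | hlt
  · -- n = p^2, p ≥ 5
    have hnpp : n = p * p := by rw [hb, heq]
    have hp5 : 5 ≤ p := by
      have hne3 : p ≠ 3 := by rintro h; rw [h] at hnpp; omega
      have hne4 : p ≠ 4 := by rintro h; rw [h] at hpp; norm_num at hpp
      omega
    have h4p : 4 * p + 1 ≤ p * p := by nlinarith
    have h1 : p ≤ (n - 1) / 2 := by omega
    have h2' : 2 * p ≤ (n - 1) / 2 := by omega
    have hd : p * (2 * p) ∣ Nat.factorial ((n - 1) / 2) :=
      aux_mul_dvd_fact p (2 * p) _ (by omega) (by omega) h1 h2' (by omega)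
    exact (Dvd.intro 2 (by rw [hnpp]; ring)).trans hd
  · -- p < b
    have h3b : 3 * b ≤ n := by calc 3 * b ≤ p * b := Nat.mul_le_mul_right b hp3
                                  _ = n := hb.symm
    have hb1 : b ≤ (n - 1) / 2 := by omega
    have hp1 : p ≤ (n - 1) / 2 := by omega
    have hd : p * b ∣ Nat.factorial ((n - 1) / 2) :=
      aux_mul_dvd_fact p b _ (by omega) (by omega) hp1 hb1 (by omega)
    exact (dvd_of_eq hb).trans hd
end

section
/- If n = 2·(2k+1) with k ≥ 0, then (n-1)!! ≡ 2k+1 (mod n), where (n-1)!! is the product of all odd numbers from 1 to n-1. -/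
theorem stmt15 (n k : ℕ) (hn : n = 2 * (2 * k + 1)) :
    (Nat.doubleFactorial (n - 1) : ZMod n) = ((2 * k + 1 : ℕ) : ZMod n) := by
  have h1 : n - 1 = 2 * (2 * k) + 1 := by omega
  rw [h1, Nat.doubleFactorial_eq_prod_odd]
  rcases Nat.eq_zero_or_pos k with hk0 | hk0
  · subst hk0; subst hn; decide
  have hk : k - 1 ∈ Finset.range (2 * k) := by simp; omega
  rw [← Finset.mul_prod_erase _ _ hk]
  have hfac : 2 * (k - 1 + 1) + 1 = 2 * k + 1 := by omega
  rw [hfac]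
  set R := ∏ i ∈ (Finset.range (2 * k)).erase (k - 1), (2 * (i + 1) + 1) with hR
  have hodd : Odd R := by
    rw [hR]
    apply Finset.prod_induction _ Odd (fun a b => Odd.mul) odd_one
    intro i _
    exact ⟨i + 1, by ring⟩
  obtain ⟨m, hm⟩ := hodd
  have hmod : (2 * k + 1) * R ≡ (2 * k + 1) [MOD n] := by
    have : (2 * k + 1) * R = n * m + (2 * k + 1) := by
      rw [hm, hn]; ring
    rw [this]
    simp [Nat.ModEq, Nat.mul_add_mod]
  exact_mod_cast (ZMod.natCast_eq_natCast_iff _ _ _).mpr hmod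
end

section
/- If n = 2^i·(2k+1) with i ≥ 3 and k ≥ 0, then (n-1)!! ≡ (2k+1)^(2^(i-2)) (mod n), where (n-1)!! is the product of all odd numbers from 1 to n-1. -/
/-!
Write `n = 2^i m` with `m` odd and use the Chinese remainder theorem. Modulo `m` both sides
vanish, since `m` is one of the odd factors of `(n-1)‼`. Modulo `2^i` the odd numbers are
periodic with period `2^(i-1)` in their index, so `(n-1)‼ ≡ ((2^i-1)‼)^m`. Splitting the odd
numbers below `2^(i+1)` into the odd `b < 2^i` and the `2^i + b ≡ b (1 + 2^i)`, where
`(1 + 2^i)^2 ≡ 1`, gives `(2^(i+1)-1)‼ ≡ ((2^i-1)‼)^2 (mod 2^(i+1))`. Since squaring lifts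
`a ≡ 1 (mod 2^c)` to `a^2 ≡ 1 (mod 2^(c+1))`, induction from `7‼ = 105 ≡ 1 (mod 8)` yields
`(2^i-1)‼ ≡ 1 (mod 2^i)`. The same lifting from `m^2 ≡ 1 (mod 8)` gives `m^(2^(i-2)) ≡ 1`.
-/

open Finset
open scoped Nat

theorem Function.Periodic.prod_range_mul {M : Type*} [CommMonoid M] {f : ℕ → M} {c : ℕ}
    (hf : Function.Periodic f c) (m : ℕ) :
    ∏ j ∈ range (c * m), f j = (∏ j ∈ range c, f j) ^ m := by
  induction m with
  | zero => simp
  | succ m ih =>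
    have hshift (j : ℕ) : f (c * m + j) = f j := by
      rw [add_comm, mul_comm]; exact hf.nat_mul m j
    rw [Nat.mul_succ, prod_range_add, ih, pow_succ]
    simp only [hshift]

namespace Nat

theorem doubleFactorial_two_mul_sub_one (N : ℕ) :
    (2 * N - 1)‼ = ∏ j ∈ range N, (2 * j + 1) := by
  cases N with
  | zero => rfl
  | succ N =>
    rw [show 2 * (N + 1) - 1 = 2 * N + 1 by omega, doubleFactorial_eq_prod_odd, prod_range_succ']
    simp

theorem dvd_doubleFactorial_add_two_mul {a : ℕ} (ha : 0 < a) (t : ℕ) :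
    a ∣ (a + 2 * t)‼ := by
  induction t with
  | zero =>
    obtain ⟨b, rfl⟩ : ∃ b, a = b + 1 := ⟨a - 1, by omega⟩
    rw [mul_zero, add_zero, doubleFactorial_add_one]
    exact dvd_mul_right _ _
  | succ t ih =>
    rw [show a + 2 * (t + 1) = a + 2 * t + 2 by ring, doubleFactorial_add_two]
    exact dvd_mul_of_dvd_right ih _

theorem doubleFactorial_two_mul_mul_sub_one_modEq (L m : ℕ) :
    (2 * L * m - 1)‼ ≡ (2 * L - 1)‼ ^ m [MOD 2 * L] := by
  have hperiodic : Function.Periodic (fun j : ℕ ↦ ((2 * j + 1 : ℕ) : ZMod (2 * L))) L := by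
    intro j
    have h2L : ((2 * L : ℕ) : ZMod (2 * L)) = 0 := ZMod.natCast_self _
    push_cast at h2L ⊢
    linear_combination h2L
  rw [mul_assoc, doubleFactorial_two_mul_sub_one, doubleFactorial_two_mul_sub_one,
    ← ZMod.natCast_eq_natCast_iff, Nat.cast_pow, Nat.cast_prod, Nat.cast_prod]
  exact hperiodic.prod_range_mul m

theorem doubleFactorial_four_mul_sub_one_modEq {L : ℕ} (hL : Even L) :
    (4 * L - 1)‼ ≡ (2 * L - 1)‼ ^ 2 [MOD 4 * L] := by
  have h4L : ((4 * L : ℕ) : ZMod (4 * L)) = 0 := ZMod.natCast_self _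
  push_cast at h4L
  -- `2L + b ≡ b (1 + 2L)` for odd `b`, as `4L ∣ 2L (b - 1)`.
  have hshift (j : ℕ) :
      ((2 * (L + j) + 1 : ℕ) : ZMod (4 * L)) =
        ((2 * j + 1 : ℕ) : ZMod (4 * L)) * (1 + 2 * L) := by
    push_cast
    linear_combination (-(j : ZMod (4 * L))) * h4L
  have hunit : (1 + 2 * (L : ZMod (4 * L))) ^ L = 1 := by
    obtain ⟨t, ht⟩ := even_iff_two_dvd.mp hL
    have hsq : (1 + 2 * (L : ZMod (4 * L))) ^ 2 = 1 := by
      linear_combination (1 + (L : ZMod (4 * L))) * h4L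
    calc (1 + 2 * (L : ZMod (4 * L))) ^ L = ((1 + 2 * (L : ZMod (4 * L))) ^ 2) ^ t := by
          rw [← pow_mul, ← ht]
      _ = 1 := by rw [hsq, one_pow]
  rw [show 4 * L = 2 * (L + L) by ring, doubleFactorial_two_mul_sub_one,
    doubleFactorial_two_mul_sub_one, ← ZMod.natCast_eq_natCast_iff, Nat.cast_pow,
    Nat.cast_prod, Nat.cast_prod, prod_range_add, ← show 4 * L = 2 * (L + L) by ring]
  simp only [hshift, prod_mul_distrib, prod_const, card_range, hunit, mul_one, sq]

theorem sq_modEq_one_of_modEq_one {a d : ℕ} (hd : 2 ∣ d) (h : a ≡ 1 [MOD d]) :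
    a ^ 2 ≡ 1 [MOD 2 * d] := by
  rw [Nat.modEq_iff_dvd] at h ⊢
  push_cast at h ⊢
  have h2 : (2 : ℤ) ∣ 1 + a := by
    have : (2 : ℤ) ∣ 1 - a := dvd_trans (by exact_mod_cast hd) h
    omega
  rw [show (1 : ℤ) - a ^ 2 = (1 + a) * (1 - a) by ring]
  exact mul_dvd_mul h2 h

theorem pow_two_pow_modEq_one {a d : ℕ} (hd : 2 ∣ d) (h : a ≡ 1 [MOD d]) (t : ℕ) :
    a ^ 2 ^ t ≡ 1 [MOD 2 ^ t * d] := by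
  induction t with
  | zero => simpa using h
  | succ t ih =>
    rw [pow_succ 2 t, pow_mul, mul_comm (2 ^ t) 2, mul_assoc]
    exact sq_modEq_one_of_modEq_one (dvd_mul_of_dvd_right hd _) ih

theorem sq_modEq_one_of_odd {m : ℕ} (hm : Odd m) : m ^ 2 ≡ 1 [MOD 8] := by
  have h8 : m % 8 = 1 ∨ m % 8 = 3 ∨ m % 8 = 5 ∨ m % 8 = 7 := by
    rw [Nat.odd_iff] at hm; omega
  unfold Nat.ModEq
  rcases h8 with h | h | h | h <;> rw [Nat.pow_mod, h]

theorem pow_two_pow_sub_two_modEq_one_of_odd {m i : ℕ} (hm : Odd m) (hi : 3 ≤ i) :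
    m ^ 2 ^ (i - 2) ≡ 1 [MOD 2 ^ i] := by
  obtain ⟨j, rfl⟩ : ∃ j, i = j + 3 := ⟨i - 3, by omega⟩
  have h := pow_two_pow_modEq_one (by norm_num) (sq_modEq_one_of_odd hm) j
  rwa [← pow_mul, ← pow_succ', show 2 ^ j * 8 = 2 ^ (j + 3) by ring] at h

theorem doubleFactorial_two_pow_sub_one_modEq_one {i : ℕ} (hi : 3 ≤ i) :
    (2 ^ i - 1)‼ ≡ 1 [MOD 2 ^ i] := by
  induction i, hi using Nat.le_induction with
  | base => decide
  | succ i hi ih =>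
    obtain ⟨j, rfl⟩ : ∃ j, i = j + 2 := ⟨i - 2, by omega⟩
    have hL : Even (2 ^ (j + 1)) := (Nat.even_pow' (by omega)).mpr even_two
    rw [show 2 ^ (j + 2) = 2 * 2 ^ (j + 1) by ring] at ih
    rw [show 2 ^ (j + 2 + 1) = 4 * 2 ^ (j + 1) by ring]
    refine (doubleFactorial_four_mul_sub_one_modEq hL).trans ?_
    rw [show 4 * 2 ^ (j + 1) = 2 * (2 * 2 ^ (j + 1)) by ring]
    exact sq_modEq_one_of_modEq_one (dvd_mul_right 2 _) ih

end Nat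

theorem stmt17 (n i k : ℕ) (hi : 3 ≤ i) (hn : n = 2 ^ i * (2 * k + 1)) :
    (Nat.doubleFactorial (n - 1) : ZMod n) = ((2 * k + 1 : ℕ) : ZMod n) ^ (2 ^ (i - 2)) := by
  subst hn
  set m := 2 * k + 1
  have hm : Odd m := odd_two_mul_add_one k
  obtain ⟨L, hL⟩ : ∃ L, 2 ^ i = 2 * L :=
    ⟨2 ^ (i - 1), by rw [← pow_succ', Nat.sub_add_cancel (by omega)]⟩
  rw [← Nat.cast_pow, ZMod.natCast_eq_natCast_iff]
  refine (Nat.modEq_and_modEq_iff_modEq_mul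
    (Nat.Coprime.pow_left i (Nat.coprime_two_left.mpr hm))).mp ⟨?_, ?_⟩
  · calc (2 ^ i * m - 1)‼ ≡ (2 ^ i - 1)‼ ^ m [MOD 2 ^ i] := by
          rw [hL]; exact Nat.doubleFactorial_two_mul_mul_sub_one_modEq L m
      _ ≡ 1 ^ m [MOD 2 ^ i] := (Nat.doubleFactorial_two_pow_sub_one_modEq_one hi).pow m
      _ = 1 := one_pow m
      _ ≡ m ^ 2 ^ (i - 2) [MOD 2 ^ i] := (Nat.pow_two_pow_sub_two_modEq_one_of_odd hm hi).symm
  · have hmL : m ≤ L * m := Nat.le_mul_of_pos_left m (by have := Nat.two_pow_pos i; omega)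
    obtain ⟨t, ht⟩ : ∃ t, 2 ^ i * m - 1 = m + 2 * t :=
      ⟨L * m - k - 1, by rw [hL, mul_assoc]; omega⟩
    have hfac : (2 ^ i * m - 1)‼ ≡ 0 [MOD m] :=
      Nat.modEq_zero_iff_dvd.mpr (ht ▸ Nat.dvd_doubleFactorial_add_two_mul hm.pos t)
    exact hfac.trans (Nat.modEq_zero_iff_dvd.mpr (dvd_pow_self m (by positivity))).symm
end
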